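/- arXiv:1106.1784 — 2 statements merged into one kernel-verified Lean document; each statement's English description precedes it below -/
import Mathlib

section
/- Let ζ ∈ ℂ be a primitive 5th root of unity and set z = 4 + 3ζ + 12ζ². Then for every integer m ≥ 1 one has z^m ≠ (z̄)^m, where z̄ denotes the complex conjugate of z; equivalently, z/z̄ is not a root of unity. -/
/-!
Write `z = P(ζ)` with `P = 4 + 3X + 12X² ∈ ℤ[X]`; since `ζ̄ = ζ⁴`, `z̄ = P(ζ⁴)`. If `z^m = z̄^m`,
then `ζ` is a root of `P^m - P(X⁴)^m`, so the minimal polynomial `Φ₅` of `ζ` divides it, and the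
divisibility survives evaluation at any root of `Φ₅` in any ring. In `ZMod 11` the element `3` has
order `5`, and `P(3) = 121 = 0` while `P(3⁴) = 571 = -1`, which gives `0 = (-1)^m`: a prime above
`11` divides `z` but not `z̄`.
-/

open Polynomial

theorem IsPrimitiveRoot.aeval_eq_zero_of_isRoot_cyclotomic {K : Type*} [Field K] [CharZero K]
    {ζ : K} {n : ℕ} (hζ : IsPrimitiveRoot ζ n) (hn : 0 < n) {f : ℤ[X]} (hf : aeval ζ f = 0)
    {R : Type*} [CommRing R] {a : R} (ha : (cyclotomic n R).IsRoot a) : aeval a f = 0 := by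
  obtain ⟨g, rfl⟩ : cyclotomic n ℤ ∣ f :=
    cyclotomic_eq_minpoly hζ hn ▸ minpoly.isIntegrallyClosed_dvd (hζ.isIntegral hn) hf
  rw [map_mul, aeval_def, eval₂_eq_eval_map, map_cyclotomic, ha.eq_zero, zero_mul]

theorem Complex.conj_eq_pow_of_pow_succ_eq_one {ζ : ℂ} {n : ℕ} (h : ζ ^ (n + 1) = 1) :
    starRingEnd ℂ ζ = ζ ^ n := by
  rw [← Complex.inv_eq_conj (Complex.norm_eq_one_of_pow_eq_one h n.succ_ne_zero)]
  exact inv_eq_of_mul_eq_one_right (by rw [← pow_succ', h])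

instance fact_prime_eleven : Fact (Nat.Prime 11) := ⟨by norm_num⟩

theorem isRoot_cyclotomic_five_zmod_eleven_three : (cyclotomic 5 (ZMod 11)).IsRoot 3 := by
  have h3 : IsPrimitiveRoot (3 : ZMod 11) 5 :=
    (IsPrimitiveRoot.iff (by norm_num)).2 ⟨by decide, fun l _ hl => by interval_cases l <;> decide⟩
  exact h3.isRoot_cyclotomic (by norm_num)

/-- If `ζ` is a primitive 5th root of unity and `z = 4 + 3ζ + 12ζ²`, then for every `m ≥ 1`
one has `z^m ≠ z̄^m`; equivalently, `z/z̄` is not a root of unity. -/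
theorem z_pow_ne_conj_z_pow (ζ : ℂ) (hζ : IsPrimitiveRoot ζ 5) :
    ∀ m : ℕ, 1 ≤ m →
      (4 + 3 * ζ + 12 * ζ ^ 2) ^ m ≠ ((starRingEnd ℂ) (4 + 3 * ζ + 12 * ζ ^ 2)) ^ m := by
  intro m hm h
  set P : ℤ[X] := 4 + 3 * X + 12 * X ^ 2
  have hPζ : aeval ζ P = 4 + 3 * ζ + 12 * ζ ^ 2 := by simp [P, map_ofNat]
  have hconj : starRingEnd ℂ (aeval ζ P) = aeval ζ (P.comp (X ^ 4)) := by
    rw [aeval_comp, aeval_X_pow, ← Complex.conj_eq_pow_of_pow_succ_eq_one hζ.pow_eq_one,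
      ← RingHom.toIntAlgHom_apply, ← aeval_algHom_apply]
    rfl
  have hf : aeval ζ (P ^ m - P.comp (X ^ 4) ^ m) = 0 := by
    rw [map_sub, map_pow, map_pow, ← hconj, hPζ, h, sub_self]
  have h3 := hζ.aeval_eq_zero_of_isRoot_cyclotomic (by norm_num) hf
    isRoot_cyclotomic_five_zmod_eleven_three
  have hP3 : aeval (3 : ZMod 11) P = 0 := by simp [P, map_ofNat]; decide
  have hQ3 : aeval (3 : ZMod 11) (P.comp (X ^ 4)) = -1 := by simp [P, map_ofNat]; decide
  rw [map_sub, map_pow, map_pow, hP3, hQ3, zero_pow (by omega), zero_sub, neg_eq_zero] at h3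
  exact pow_ne_zero m (by decide) h3
end

section
/- Let E be the elliptic curve over ℂ with affine Weierstrass equation y² = x³ + x, and let ι : E(ℂ) → E(ℂ) be the map sending the point at infinity O to O and an affine point (x, y) to (−x, i·y). Let P = (x, y) be an affine point of E(ℂ) such that 2•P + ι(P) is again an affine point (x′, y′). Then 5x² + 1 + 2i ≠ 0 and x′ = (3 − 4i)·x·(x² + 1 − 2i)² / (5x² + 1 + 2i)². In other words, the x-coordinate map semiconjugates the isogeny [2+i] to the Lattès map φ(x) = (3−4i)x(x²+1−2i)²/(5x²+1+2i)² on ℙ¹. -/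
/-!
Write `2P = (X, Y)`. The tangent formulas give `4y²X = (x² - 1)²` and
`2yY = (3x² + 1)(x - X) - 2y²`, so together with `y² = x³ + x` everything becomes a function
of `x`. When `X ≠ -x`, the point `[2+i]P = 2P + ι(P)` comes from the chord through `(X, Y)` and
`ι(P) = (-x, iy)`: `x' = λ² - X + x` with `λ = (Y - iy)/(X + x)`. Both `4y²(X + x)` and
`8y³(Y - iy)` are polynomials in `x`, so `x' = φ(x)` reduces to a polynomial identity over `ℚ(i)`.
The degenerate cases are `2P = O` (then `x³ + x = 0` and `x' = -x`) and `2P = ι(P)`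
(then `[2+i]P = 2ι(P)`, so `x' = -X = x`, and `5x² + 1 - 2i = 0`); `2P = -ι(P)` would make
`[2+i]P = O`.
-/

open Complex

/-- The elliptic curve `y² = x³ + x` over `ℂ`. -/
noncomputable def Ecurve : WeierstrassCurve.Affine ℂ :=
  { a₁ := 0, a₂ := 0, a₃ := 0, a₄ := 1, a₆ := 0 }

lemma Ecurve_nonsingular_neg_I_mul {x y : ℂ} (h : Ecurve.Nonsingular x y) :
    Ecurve.Nonsingular (-x) (Complex.I * y) := by
  rw [WeierstrassCurve.Affine.nonsingular_iff, WeierstrassCurve.Affine.equation_iff] at h ⊢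
  obtain ⟨h1, h2⟩ := h
  simp only [Ecurve] at h1 h2 ⊢
  constructor
  · linear_combination y ^ 2 * Complex.I_sq - h1
  · rcases h2 with h2 | h2
    · left
      intro hc
      exact h2 (by linear_combination hc)
    · right
      have hy : y ≠ 0 := fun hy0 => h2 (by rw [hy0]; ring)
      intro hc
      have h2I : (2 * Complex.I : ℂ) ≠ 0 := by simp [Complex.I_ne_zero]
      have hzero : (2 * Complex.I) * y = 0 := by linear_combination hc
      rcases mul_eq_zero.mp hzero with h0 | h0
      · exact h2I h0
      · exact hy h0

/-- Complex multiplication by `i` on `E(ℂ)`: `O ↦ O`, `(x, y) ↦ (-x, i·y)`. -/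
noncomputable def iotaE : Ecurve.Point → Ecurve.Point
  | .zero => .zero
  | .some _ _ h => .some _ _ (Ecurve_nonsingular_neg_I_mul h)

open WeierstrassCurve.Affine

namespace WeierstrassCurve.Affine.Point

variable {F : Type*} [Field F] [DecidableEq F] {W : WeierstrassCurve.Affine F}

lemma some_add_some_eq_some_iff {x₁ y₁ x₂ y₂ x₃ y₃ : F} {h₁ : W.Nonsingular x₁ y₁}
    {h₂ : W.Nonsingular x₂ y₂} {h₃ : W.Nonsingular x₃ y₃} :
    some _ _ h₁ + some _ _ h₂ = some _ _ h₃ ↔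
      ¬(x₁ = x₂ ∧ y₁ = W.negY x₂ y₂) ∧ x₃ = W.addX x₁ x₂ (W.slope x₁ x₂ y₁ y₂) ∧
        y₃ = W.addY x₁ x₂ y₁ (W.slope x₁ x₂ y₁ y₂) := by
  by_cases hxy : x₁ = x₂ ∧ y₁ = W.negY x₂ y₂
  · rw [add_of_Y_eq hxy.1 hxy.2]
    exact iff_of_false (some_ne_zero h₃).symm fun h => h.1 hxy
  · rw [add_some hxy, some.injEq, eq_comm (a := W.addX _ _ _), eq_comm (a := W.addY _ _ _ _)]
    exact (and_iff_right hxy).symm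

end WeierstrassCurve.Affine.Point

lemma Ecurve_equation_iff {x y : ℂ} : Ecurve.Equation x y ↔ y ^ 2 = x ^ 3 + x := by
  rw [equation_iff]
  simp [Ecurve]

lemma Ecurve_negY (x y : ℂ) : Ecurve.negY x y = -y := by
  simp [Ecurve, negY]

lemma iotaE_some {x y : ℂ} (h : Ecurve.Nonsingular x y) :
    iotaE (.some _ _ h) = .some _ _ (Ecurve_nonsingular_neg_I_mul h) :=
  rfl

lemma Ecurve_Y_eq_zero_of_add_self_eq_zero {x y : ℂ} {h : Ecurve.Nonsingular x y}
    (h2 : Point.some _ _ h + Point.some _ _ h = 0) : y = 0 := by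
  rw [add_eq_zero_iff_eq_neg, Point.neg_some, Point.some.injEq, Ecurve_negY] at h2
  exact CharZero.eq_neg_self_iff.mp h2.2

lemma Ecurve_addX (x₁ x₂ ℓ : ℂ) : Ecurve.addX x₁ x₂ ℓ = ℓ ^ 2 - x₁ - x₂ := by
  simp [addX, Ecurve]

lemma Ecurve_addY (x₁ x₂ y₁ ℓ : ℂ) :
    Ecurve.addY x₁ x₂ y₁ ℓ = -(ℓ * (ℓ ^ 2 - x₁ - x₂ - x₁) + y₁) := by
  rw [addY, negAddY, Ecurve_negY, Ecurve_addX]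

lemma Ecurve_slope_self {x y : ℂ} (hy : y ≠ Ecurve.negY x y) :
    Ecurve.slope x x y y = (3 * x ^ 2 + 1) / (2 * y) := by
  rw [slope_of_Y_ne rfl hy, Ecurve_negY]
  simp only [Ecurve]
  ring

lemma Ecurve_coords_of_add_self_eq_some {x y X Y : ℂ} {h : Ecurve.Nonsingular x y}
    {hQ : Ecurve.Nonsingular X Y} (h2 : Point.some _ _ h + Point.some _ _ h = Point.some _ _ hQ) :
    y ≠ 0 ∧ 4 * y ^ 2 * X = (x ^ 2 - 1) ^ 2 ∧
      2 * y * Y = (3 * x ^ 2 + 1) * (x - X) - 2 * y ^ 2 := by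
  have e := Ecurve_equation_iff.mp h.1
  obtain ⟨hne, rfl, rfl⟩ := Point.some_add_some_eq_some_iff.mp h2
  have hy' : y ≠ Ecurve.negY x y := fun h => hne ⟨rfl, h⟩
  have hy : y ≠ 0 := fun hy => hy' (by rw [Ecurve_negY, hy, _root_.neg_zero])
  rw [Ecurve_addY, Ecurve_addX, Ecurve_slope_self hy']
  refine ⟨hy, ?_, ?_⟩ <;> field_simp
  · linear_combination (-32 * x) * e
  · ring

lemma Ecurve_X_of_add_eq_some_of_X_ne {x₁ y₁ x₂ y₂ x₃ y₃ : ℂ} {h₁ : Ecurve.Nonsingular x₁ y₁}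
    {h₂ : Ecurve.Nonsingular x₂ y₂} {h₃ : Ecurve.Nonsingular x₃ y₃}
    (h : Point.some _ _ h₁ + Point.some _ _ h₂ = Point.some _ _ h₃) (hx : x₁ ≠ x₂) :
    x₃ = ((y₁ - y₂) / (x₁ - x₂)) ^ 2 - x₁ - x₂ := by
  rw [(Point.some_add_some_eq_some_iff.mp h).2.1, slope_of_X_ne hx, Ecurve_addX]

noncomputable def lattesMap (x : ℂ) : ℂ :=
  (3 - 4 * I) * x * (x ^ 2 + 1 - 2 * I) ^ 2 / (5 * x ^ 2 + 1 + 2 * I) ^ 2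

lemma lattesMap_eq_neg_self {x : ℂ} (hx : x ^ 3 + x = 0) :
    5 * x ^ 2 + 1 + 2 * I ≠ 0 ∧ lattesMap x = -x := by
  have hE : 5 * x ^ 2 + 1 + 2 * I ≠ 0 := by grind [I_sq]
  refine ⟨hE, ?_⟩
  rw [lattesMap, div_eq_iff (pow_ne_zero 2 hE)]
  grind [I_sq]

lemma lattesMap_eq_self {x : ℂ}
    (hx : 5 * x ^ 2 + 1 - 2 * I = 0) : 5 * x ^ 2 + 1 + 2 * I ≠ 0 ∧ lattesMap x = x := by
  have hE : 5 * x ^ 2 + 1 + 2 * I ≠ 0 := by grind [I_sq]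
  refine ⟨hE, ?_⟩
  rw [lattesMap, div_eq_iff (pow_ne_zero 2 hE)]
  grind [I_sq]

lemma five_mul_quartic_eq_mul (x : ℂ) :
    5 * (5 * x ^ 4 + 2 * x ^ 2 + 1) = (5 * x ^ 2 + 1 + 2 * I) * (5 * x ^ 2 + 1 - 2 * I) := by
  linear_combination 4 * I_sq

lemma lattesMap_numerator_identity (x : ℂ) :
    (5 * x ^ 2 + 1 + 2 * I) ^ 2 *
      (((3 * x ^ 2 + 1) * (3 * x ^ 4 + 6 * x ^ 2 - 1) - 8 * (1 + I) * (x ^ 3 + x) ^ 2) ^ 2 +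
        (5 * x ^ 4 + 2 * x ^ 2 + 1) ^ 2 * (3 * x ^ 4 + 6 * x ^ 2 - 1)) =
      4 * (x ^ 3 + x) * (5 * x ^ 4 + 2 * x ^ 2 + 1) ^ 2 *
        ((3 - 4 * I) * x * (x ^ 2 + 1 - 2 * I) ^ 2) := by
  grind [I_sq]

/-- `X` stands for `x(2P)` and `M` for the squared slope `λ²`, both written in terms of `x`. -/
lemma lattesMap_eq_sub_add {x X M : ℂ} (hu : x ^ 3 + x ≠ 0) (hD : 5 * x ^ 4 + 2 * x ^ 2 + 1 ≠ 0)
    (hX : 4 * (x ^ 3 + x) * X = (x ^ 2 - 1) ^ 2)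
    (hM : 4 * (x ^ 3 + x) * (5 * x ^ 4 + 2 * x ^ 2 + 1) ^ 2 * M =
      ((3 * x ^ 2 + 1) * (3 * x ^ 4 + 6 * x ^ 2 - 1) - 8 * (1 + I) * (x ^ 3 + x) ^ 2) ^ 2) :
    5 * x ^ 2 + 1 + 2 * I ≠ 0 ∧ lattesMap x = M - X + x := by
  have hE : 5 * x ^ 2 + 1 + 2 * I ≠ 0 := fun hE =>
    hD (by linear_combination (five_mul_quartic_eq_mul x + (5 * x ^ 2 + 1 - 2 * I) * hE) / 5)
  refine ⟨hE, ?_⟩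
  rw [lattesMap, div_eq_iff (pow_ne_zero 2 hE)]
  apply mul_left_cancel₀ (mul_ne_zero (mul_ne_zero (by norm_num : (4 : ℂ) ≠ 0) hu) (pow_ne_zero 2 hD))
  linear_combination (-(5 * x ^ 2 + 1 + 2 * I) ^ 2) * hM
    + (5 * x ^ 2 + 1 + 2 * I) ^ 2 * (5 * x ^ 4 + 2 * x ^ 2 + 1) ^ 2 * hX
    - lattesMap_numerator_identity x

lemma lattesMap_eq_of_X_ne {x y X Y : ℂ} (e : y ^ 2 = x ^ 3 + x) (hy : y ≠ 0)
    (hX : 4 * y ^ 2 * X = (x ^ 2 - 1) ^ 2)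
    (hY : 2 * y * Y = (3 * x ^ 2 + 1) * (x - X) - 2 * y ^ 2) (hXx : X ≠ -x) :
    5 * x ^ 2 + 1 + 2 * I ≠ 0 ∧ lattesMap x = ((Y - I * y) / (X - -x)) ^ 2 - X - -x := by
  have hXx' : X - -x ≠ 0 := sub_ne_zero.mpr hXx
  have hA : 4 * y ^ 2 * (X - -x) = 5 * x ^ 4 + 2 * x ^ 2 + 1 := by
    linear_combination hX + 4 * x * e
  have hN : 8 * y ^ 3 * (Y - I * y) =
      (3 * x ^ 2 + 1) * (3 * x ^ 4 + 6 * x ^ 2 - 1) - 8 * (1 + I) * (x ^ 3 + x) ^ 2 := by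
    linear_combination 4 * y ^ 2 * hY - (3 * x ^ 2 + 1) * hX
      + (4 * x * (3 * x ^ 2 + 1) - 8 * (1 + I) * (y ^ 2 + x ^ 3 + x)) * e
  have hu : x ^ 3 + x ≠ 0 := e ▸ pow_ne_zero 2 hy
  have hD : 5 * x ^ 4 + 2 * x ^ 2 + 1 ≠ 0 := hA ▸ mul_ne_zero (by simpa using hy) hXx'
  have hM : 4 * (x ^ 3 + x) * (5 * x ^ 4 + 2 * x ^ 2 + 1) ^ 2 * ((Y - I * y) / (X - -x)) ^ 2 =
      ((3 * x ^ 2 + 1) * (3 * x ^ 4 + 6 * x ^ 2 - 1) - 8 * (1 + I) * (x ^ 3 + x) ^ 2) ^ 2 := by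
    rw [← hN, ← hA, ← e]
    field_simp
    ring
  obtain ⟨hE, hφ⟩ := lattesMap_eq_sub_add hu hD (e ▸ hX) hM
  exact ⟨hE, by rw [hφ]; ring⟩

lemma lattesMap_eq_of_double_eq_iota {x y x' : ℂ} (e : y ^ 2 = x ^ 3 + x) (hy : y ≠ 0)
    (hX : 4 * y ^ 2 * -x = (x ^ 2 - 1) ^ 2)
    (hY : 2 * y * (I * y) = (3 * x ^ 2 + 1) * (x - -x) - 2 * y ^ 2)
    (hx' : 4 * (I * y) ^ 2 * x' = ((-x) ^ 2 - 1) ^ 2) :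
    5 * x ^ 2 + 1 + 2 * I ≠ 0 ∧ lattesMap x = x' := by
  have hx0 : x ≠ 0 := by
    rintro rfl
    norm_num at hX
  have h5 : 5 * x ^ 2 + 1 - 2 * I = 0 := by
    have : x * (5 * x ^ 2 + 1 - 2 * I) = 0 := by
      linear_combination (2 + I) * ((1 + I) * e - hY / 2) + (x ^ 3 + x) * I_sq
    exact (mul_eq_zero.mp this).resolve_left hx0
  have hx'x : x' = x := by
    apply mul_left_cancel₀ (mul_ne_zero (by norm_num : (4 : ℂ) ≠ 0) (pow_ne_zero 2 hy))
    linear_combination -hx' + hX + 4 * y ^ 2 * x' * I_sq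
  obtain ⟨hE, hφ⟩ := lattesMap_eq_self h5
  exact ⟨hE, hφ.trans hx'x.symm⟩

/-- The `x`-coordinate semiconjugates `[2+i] = 2·id + ι` to the Lattès map
`φ(x) = (3−4i)x(x²+1−2i)²/(5x²+1+2i)²`. -/
theorem lattes_map_of_two_add_I {x y x' y' : ℂ}
    (h : Ecurve.Nonsingular x y) (h' : Ecurve.Nonsingular x' y')
    (hP : 2 • WeierstrassCurve.Affine.Point.some _ _ h + iotaE (.some _ _ h) = .some _ _ h') :
    5 * x ^ 2 + 1 + 2 * Complex.I ≠ 0 ∧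
    x' = (3 - 4 * Complex.I) * x * (x ^ 2 + 1 - 2 * Complex.I) ^ 2 /
      (5 * x ^ 2 + 1 + 2 * Complex.I) ^ 2 := by
  have e := Ecurve_equation_iff.mp h.1
  rw [two_nsmul, iotaE_some] at hP
  rcases hQ : Point.some _ _ h + Point.some _ _ h with _ | ⟨X, Y, hXY⟩
  · rw [hQ, ← Point.zero_def, zero_add, Point.some.injEq] at hP
    have hy := Ecurve_Y_eq_zero_of_add_self_eq_zero hQ
    obtain ⟨hE, hφ⟩ := lattesMap_eq_neg_self (x := x) (by rw [← e, hy]; ring)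
    exact ⟨hE, hP.1 ▸ hφ.symm⟩
  obtain ⟨hy, hX, hY⟩ := Ecurve_coords_of_add_self_eq_some hQ
  rw [hQ] at hP
  by_cases hXx : X = -x
  · -- here `2P = ι(P)`
    obtain rfl := hXx
    obtain rfl : Y = I * y := Y_eq_of_Y_ne hXY.1 (Ecurve_nonsingular_neg_I_mul h).1 rfl
      fun hY => (Point.some_add_some_eq_some_iff.mp hP).1 ⟨rfl, hY⟩
    obtain ⟨-, hx', -⟩ := Ecurve_coords_of_add_self_eq_some hP
    exact (lattesMap_eq_of_double_eq_iota e hy hX hY hx').imp_right Eq.symm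
  · obtain ⟨hE, hφ⟩ := lattesMap_eq_of_X_ne e hy hX hY hXx
    exact ⟨hE, (Ecurve_X_of_add_eq_some_of_X_ne hP hXx).trans hφ.symm⟩
end
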